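/- (Subdifferential of a spectral function, set formula.) Let 𝔥 be a Euclidean space with spectral decomposition system (𝒳, S, γ, (Λ_a)_{a∈A}), let φ : 𝒳 → (−∞, +∞] be proper (not identically +∞) and S-invariant (φ(s • x) = φ(x) for all s ∈ S, x ∈ 𝒳), and let X ∈ 𝔥. Set A_X = {a ∈ A : X = Λ_a(γ(X))}. Then: (i) ∂(φ ∘ γ)(X) = { Λ_a y : y ∈ ∂φ(γ(X)), a ∈ A_X }; and (ii) ∂(φ ∘ γ)(X) is a singleton if and only if ∂φ(γ(X)) is a singleton. Here, for a proper function f : 𝓗 → (−∞, +∞] on a Euclidean space 𝓗, the convex subdifferential is ∂f(x) = { y ∈ 𝓗 : for all z ∈ 𝓗, ⟨z − x, y⟩ + f(x) ≤ f(z) }. -/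

import Mathlib

open scoped InnerProductSpace

/-- A spectral decomposition system `(𝓧, S, γ, (Λ a)_{a ∈ A})` for a Euclidean space `𝓗`,
with spectral-induced ordering mapping `τ`. -/
structure SpectralDecompositionSystem
    (𝓗 : Type*) (𝓧 : Type*) [NormedAddCommGroup 𝓗] [InnerProductSpace ℝ 𝓗]
    [NormedAddCommGroup 𝓧] [InnerProductSpace ℝ 𝓧]
    (S : Type*) [Group S] [MulAction S 𝓧]
    {A : Type*} (γ : 𝓗 → 𝓧) (Λ : A → 𝓧 →ₗ[ℝ] 𝓗) (τ : 𝓧 → 𝓧) : Prop where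
  /-- `S` acts on `𝓧` by linear maps. -/
  smul_add_smul : ∀ (s : S) (c : ℝ) (x y : 𝓧), s • (c • x + y) = c • (s • x) + s • y
  /-- `S` acts on `𝓧` by isometries. -/
  norm_smul : ∀ (s : S) (x : 𝓧), ‖s • x‖ = ‖x‖
  /-- Each `Λ a` is a (linear) isometry. -/
  norm_lambda : ∀ (a : A) (x : 𝓧), ‖Λ a x‖ = ‖x‖
  /-- `τ` is `S`-invariant. -/
  tau_smul : ∀ (s : S) (x : 𝓧), τ (s • x) = τ x
  /-- `τ x` belongs to the orbit `S • x`. -/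
  tau_orbit : ∀ x : 𝓧, ∃ s : S, τ x = s • x
  /-- `γ ∘ Λ a = τ` for all `a ∈ A`. -/
  gamma_lambda : ∀ (a : A) (x : 𝓧), γ (Λ a x) = τ x
  /-- Every element of `𝓗` admits a spectral decomposition. -/
  exists_decomp : ∀ Z : 𝓗, ∃ a : A, Z = Λ a (γ Z)
  /-- Von Neumann-type trace inequality. -/
  inner_le : ∀ Z W : 𝓗, ⟪Z, W⟫_ℝ ≤ ⟪γ Z, γ W⟫_ℝ

variable {𝓗 𝓧 : Type*} [NormedAddCommGroup 𝓗] [InnerProductSpace ℝ 𝓗]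
  [FiniteDimensional ℝ 𝓗] [NormedAddCommGroup 𝓧] [InnerProductSpace ℝ 𝓧]
  [FiniteDimensional ℝ 𝓧] {S : Type*} [Group S] [MulAction S 𝓧]
  {A : Type*} [Nonempty A]

/-- The convex subdifferential of an extended-real-valued function on a Euclidean space. -/
def subdifferential {V : Type*} [NormedAddCommGroup V] [InnerProductSpace ℝ V]
    (f : V → EReal) (x : V) : Set V :=
  {y | ∀ z : V, ((⟪z - x, y⟫_ℝ : ℝ) : EReal) + f x ≤ f z}

/-!
For `y ∈ ∂φ(γ Z)` and `Z = Λ a (γ Z)`, the trace inequality gives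
`⟪z, Λ a y⟫ ≤ ⟪γ z, τ y⟫ = ⟪s • γ z, y⟫` for some `s ∈ S`, so testing the subgradient
inequality of `y` at `s • γ z` and using the `S`-invariance of `φ` shows `Λ a y ∈ ∂(φ ∘ γ)(Z)`.
Conversely, testing a subgradient `W = Λ b (γ W)` of `φ ∘ γ` at `Λ b (γ Z)`, a point with the same
value, forces equality `⟪Z, W⟫ = ⟪γ Z, γ W⟫`. Equality makes `γ` additive on `Z, W`, so one
decomposition of `Z + W` decomposes `Z` and `W` simultaneously, and pulling back along that `Λ a`
gives `γ W ∈ ∂φ(γ Z)`.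

For uniqueness, `Λ a` is injective; conversely `∂(φ ∘ γ)(Z)` is convex and, when
`∂φ(γ Z) = {y₀}`, lies on the sphere of radius `‖y₀‖`, so it is a point by strict convexity.
-/

section Subdifferential

variable {V : Type*} [NormedAddCommGroup V] [InnerProductSpace ℝ V] {f : V → EReal} {x y : V}

theorem ne_top_of_mem_subdifferential (hf : ∃ z, f z ≠ ⊤) (hy : y ∈ subdifferential f x) :
    f x ≠ ⊤ := by
  obtain ⟨z, hz⟩ := hf
  intro hx
  have h := hy z
  rw [hx, EReal.coe_add_top, top_le_iff] at h
  exact hz h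

theorem inner_sub_nonpos_of_mem_subdifferential (hy : y ∈ subdifferential f x) (hbot : f x ≠ ⊥)
    (htop : f x ≠ ⊤) {z : V} (hz : f z ≤ f x) : ⟪z - x, y⟫_ℝ ≤ 0 := by
  have h := (hy z).trans hz
  rw [← EReal.coe_toReal htop hbot, ← EReal.coe_add, EReal.coe_le_coe_iff] at h
  linarith

theorem convex_subdifferential (f : V → EReal) (x : V) : Convex ℝ (subdifferential f x) := by
  intro y₁ hy₁ y₂ hy₂ a b ha hb hab z
  have hle : ⟪z - x, a • y₁ + b • y₂⟫_ℝ ≤ max ⟪z - x, y₁⟫_ℝ ⟪z - x, y₂⟫_ℝ := by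
    rw [inner_add_right, real_inner_smul_right, real_inner_smul_right]
    exact Convex.combo_le_max _ _ ha hb hab
  refine le_trans (by gcongr) (?_ : ((max ⟪z - x, y₁⟫_ℝ ⟪z - x, y₂⟫_ℝ : ℝ) : EReal) + f x ≤ f z)
  rcases max_choice ⟪z - x, y₁⟫_ℝ ⟪z - x, y₂⟫_ℝ with h | h <;> rw [h]
  exacts [hy₁ z, hy₂ z]

end Subdifferential

theorem Convex.subsingleton_of_norm_eq {E : Type*} [NormedAddCommGroup E] [NormedSpace ℝ E]
    [StrictConvexSpace ℝ E] {s : Set E} (hs : Convex ℝ s)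
    (h : ∀ x ∈ s, ∀ y ∈ s, ‖x‖ = ‖y‖) : s.Subsingleton := by
  intro x hx y hy
  have hmid : (2⁻¹ : ℝ) • x + (2⁻¹ : ℝ) • y ∈ s := hs hx hy (by norm_num) (by norm_num) (by norm_num)
  have hnorm := h _ hmid x hx
  rw [← smul_add, norm_smul] at hnorm
  refine eq_of_norm_eq_of_norm_add_eq (h x hx y hy) ?_
  rw [← h x hx y hy]
  norm_num at hnorm
  linarith

theorem eq_of_norm_eq_of_norm_sq_le_inner {E : Type*} [NormedAddCommGroup E]
    [InnerProductSpace ℝ E] {x y : E} (hn : ‖x‖ = ‖y‖) (h : ‖x‖ ^ 2 ≤ ⟪x, y⟫_ℝ) : x = y := by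
  have hsq : ‖x - y‖ ^ 2 ≤ 0 := by
    rw [norm_sub_sq_real, ← hn]
    linarith
  exact sub_eq_zero.1 (norm_eq_zero.1 (pow_eq_zero_iff two_ne_zero |>.1
    (le_antisymm hsq (sq_nonneg _))))

namespace SpectralDecompositionSystem

variable {𝓗 𝓧 : Type*} [NormedAddCommGroup 𝓗] [InnerProductSpace ℝ 𝓗]
  [NormedAddCommGroup 𝓧] [InnerProductSpace ℝ 𝓧] {S : Type*} [Group S] [MulAction S 𝓧]
  {A : Type*} {γ : 𝓗 → 𝓧} {Λ : A → 𝓧 →ₗ[ℝ] 𝓗} {τ : 𝓧 → 𝓧}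

def smulLinearIsometry (hsys : SpectralDecompositionSystem 𝓗 𝓧 S γ Λ τ) (s : S) :
    𝓧 →ₗᵢ[ℝ] 𝓧 where
  toFun x := s • x
  map_add' x y := by simpa using hsys.smul_add_smul s 1 x y
  map_smul' c x := by
    have h0 : s • (0 : 𝓧) = 0 := norm_eq_zero.1 ((hsys.norm_smul s 0).trans norm_zero)
    simpa [h0] using hsys.smul_add_smul s c x 0
  norm_map' := hsys.norm_smul s

theorem inner_smul_smul (hsys : SpectralDecompositionSystem 𝓗 𝓧 S γ Λ τ) (s : S) (x y : 𝓧) :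
    ⟪s • x, s • y⟫_ℝ = ⟪x, y⟫_ℝ :=
  (hsys.smulLinearIsometry s).inner_map_map x y

theorem inner_lambda_lambda (hsys : SpectralDecompositionSystem 𝓗 𝓧 S γ Λ τ) (a : A)
    (x y : 𝓧) : ⟪Λ a x, Λ a y⟫_ℝ = ⟪x, y⟫_ℝ :=
  LinearIsometry.inner_map_map ⟨Λ a, hsys.norm_lambda a⟩ x y

theorem lambda_injective (hsys : SpectralDecompositionSystem 𝓗 𝓧 S γ Λ τ) (a : A) :
    Function.Injective (Λ a) :=
  LinearIsometry.injective ⟨Λ a, hsys.norm_lambda a⟩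

theorem norm_gamma (hsys : SpectralDecompositionSystem 𝓗 𝓧 S γ Λ τ) (Z : 𝓗) : ‖γ Z‖ = ‖Z‖ := by
  obtain ⟨a, ha⟩ := hsys.exists_decomp Z
  conv_rhs => rw [ha, hsys.norm_lambda]

theorem gamma_lambda_gamma (hsys : SpectralDecompositionSystem 𝓗 𝓧 S γ Λ τ) (a : A) (Z : 𝓗) :
    γ (Λ a (γ Z)) = γ Z := by
  obtain ⟨b, hb⟩ := hsys.exists_decomp Z
  rw [hsys.gamma_lambda]
  conv_rhs => rw [hb, hsys.gamma_lambda]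

theorem comp_gamma_lambda (hsys : SpectralDecompositionSystem 𝓗 𝓧 S γ Λ τ) {β : Type*}
    {φ : 𝓧 → β} (hφ : ∀ (s : S) (x : 𝓧), φ (s • x) = φ x) (a : A) (x : 𝓧) :
    φ (γ (Λ a x)) = φ x := by
  obtain ⟨s, hs⟩ := hsys.tau_orbit x
  rw [hsys.gamma_lambda, hs, hφ]

theorem exists_inner_le_inner_smul_gamma (hsys : SpectralDecompositionSystem 𝓗 𝓧 S γ Λ τ)
    (a : A) (z : 𝓗) (y : 𝓧) : ∃ s : S, ⟪z, Λ a y⟫_ℝ ≤ ⟪s • γ z, y⟫_ℝ := by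
  obtain ⟨s, hs⟩ := hsys.tau_orbit y
  refine ⟨s⁻¹, ?_⟩
  calc ⟪z, Λ a y⟫_ℝ ≤ ⟪γ z, γ (Λ a y)⟫_ℝ := hsys.inner_le _ _
    _ = ⟪s • s⁻¹ • γ z, s • y⟫_ℝ := by rw [hsys.gamma_lambda, hs, smul_inv_smul]
    _ = ⟪s⁻¹ • γ z, y⟫_ℝ := hsys.inner_smul_smul _ _ _

theorem gamma_add_of_inner_eq (hsys : SpectralDecompositionSystem 𝓗 𝓧 S γ Λ τ) {Z W : 𝓗}
    (h : ⟪γ Z, γ W⟫_ℝ = ⟪Z, W⟫_ℝ) : γ (Z + W) = γ Z + γ W := by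
  refine eq_of_norm_eq_of_norm_sq_le_inner ?_ ?_
  · rw [hsys.norm_gamma, ← sq_eq_sq₀ (norm_nonneg _) (norm_nonneg _), norm_add_sq_real,
      norm_add_sq_real, hsys.norm_gamma, hsys.norm_gamma, h]
  · calc ‖γ (Z + W)‖ ^ 2 = ⟪Z + W, Z⟫_ℝ + ⟪Z + W, W⟫_ℝ := by
          rw [hsys.norm_gamma, ← inner_add_right, real_inner_self_eq_norm_sq]
      _ ≤ ⟪γ (Z + W), γ Z⟫_ℝ + ⟪γ (Z + W), γ W⟫_ℝ :=
          add_le_add (hsys.inner_le _ _) (hsys.inner_le _ _)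
      _ = ⟪γ (Z + W), γ Z + γ W⟫_ℝ := (inner_add_right _ _ _).symm

theorem exists_simultaneous_decomp (hsys : SpectralDecompositionSystem 𝓗 𝓧 S γ Λ τ) {Z W : 𝓗}
    (h : ⟪γ Z, γ W⟫_ℝ ≤ ⟪Z, W⟫_ℝ) : ∃ a : A, Z = Λ a (γ Z) ∧ W = Λ a (γ W) := by
  obtain ⟨a, ha⟩ := hsys.exists_decomp (Z + W)
  rw [hsys.gamma_add_of_inner_eq (le_antisymm h (hsys.inner_le Z W)), map_add] at ha
  have hW : ⟪Λ a (γ Z), W⟫_ℝ ≤ ⟪Λ a (γ Z), Λ a (γ W)⟫_ℝ :=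
    calc ⟪Λ a (γ Z), W⟫_ℝ ≤ ⟪γ (Λ a (γ Z)), γ W⟫_ℝ := hsys.inner_le _ _
      _ = ⟪Λ a (γ Z), Λ a (γ W)⟫_ℝ := by rw [hsys.gamma_lambda_gamma, hsys.inner_lambda_lambda]
  have hsum : ⟪Λ a (γ Z), Z⟫_ℝ + ⟪Λ a (γ Z), W⟫_ℝ =
      ‖Λ a (γ Z)‖ ^ 2 + ⟪Λ a (γ Z), Λ a (γ W)⟫_ℝ := by
    rw [← inner_add_right, ha, inner_add_right, real_inner_self_eq_norm_sq]
  have hZ : Λ a (γ Z) = Z :=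
    eq_of_norm_eq_of_norm_sq_le_inner (by rw [hsys.norm_lambda, hsys.norm_gamma]) (by linarith)
  exact ⟨a, hZ.symm, add_left_cancel (hZ ▸ ha)⟩

variable {φ : 𝓧 → EReal} {Z W : 𝓗}

theorem lambda_mem_subdifferential_comp (hsys : SpectralDecompositionSystem 𝓗 𝓧 S γ Λ τ)
    (hφ : ∀ (s : S) (x : 𝓧), φ (s • x) = φ x) {a : A} (haZ : Z = Λ a (γ Z)) {y : 𝓧}
    (hy : y ∈ subdifferential φ (γ Z)) : Λ a y ∈ subdifferential (fun W => φ (γ W)) Z := by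
  intro z
  obtain ⟨s, hs⟩ := hsys.exists_inner_le_inner_smul_gamma a z y
  have hZ : ⟪Z, Λ a y⟫_ℝ = ⟪γ Z, y⟫_ℝ :=
    calc ⟪Z, Λ a y⟫_ℝ = ⟪Λ a (γ Z), Λ a y⟫_ℝ := by rw [← haZ]
      _ = ⟪γ Z, y⟫_ℝ := hsys.inner_lambda_lambda _ _ _
  have hle : ⟪z - Z, Λ a y⟫_ℝ ≤ ⟪s • γ z - γ Z, y⟫_ℝ := by
    rw [inner_sub_left, inner_sub_left, hZ]
    linarith
  calc ((⟪z - Z, Λ a y⟫_ℝ : ℝ) : EReal) + φ (γ Z)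
      ≤ ((⟪s • γ z - γ Z, y⟫_ℝ : ℝ) : EReal) + φ (γ Z) := by gcongr
    _ ≤ φ (s • γ z) := hy _
    _ = φ (γ z) := hφ s _

theorem exists_simultaneous_decomp_of_mem_subdifferential_comp
    (hsys : SpectralDecompositionSystem 𝓗 𝓧 S γ Λ τ) (hbot : φ (γ Z) ≠ ⊥)
    (htop : φ (γ Z) ≠ ⊤) (hW : W ∈ subdifferential (fun W => φ (γ W)) Z) :
    ∃ a : A, Z = Λ a (γ Z) ∧ W = Λ a (γ W) := by
  obtain ⟨b, hb⟩ := hsys.exists_decomp W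
  have h := inner_sub_nonpos_of_mem_subdifferential hW hbot htop (z := Λ b (γ Z))
    (le_of_eq (congrArg φ (hsys.gamma_lambda_gamma b Z)))
  refine hsys.exists_simultaneous_decomp ?_
  calc ⟪γ Z, γ W⟫_ℝ = ⟪Λ b (γ Z), Λ b (γ W)⟫_ℝ := (hsys.inner_lambda_lambda _ _ _).symm
    _ = ⟪Λ b (γ Z), W⟫_ℝ := by rw [← hb]
    _ ≤ ⟪Z, W⟫_ℝ := by
      rw [inner_sub_left] at h
      linarith

theorem gamma_mem_subdifferential_of_mem_subdifferential_comp
    (hsys : SpectralDecompositionSystem 𝓗 𝓧 S γ Λ τ) (hφ : ∀ (s : S) (x : 𝓧), φ (s • x) = φ x)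
    (hW : W ∈ subdifferential (fun W => φ (γ W)) Z) {a : A} (haZ : Z = Λ a (γ Z))
    (haW : W = Λ a (γ W)) : γ W ∈ subdifferential φ (γ Z) := by
  intro x
  have hinner : ⟪Λ a x - Z, W⟫_ℝ = ⟪x - γ Z, γ W⟫_ℝ :=
    calc ⟪Λ a x - Z, W⟫_ℝ = ⟪Λ a x - Λ a (γ Z), Λ a (γ W)⟫_ℝ := by rw [← haZ, ← haW]
      _ = ⟪x - γ Z, γ W⟫_ℝ := by rw [← map_sub, hsys.inner_lambda_lambda]
  simpa only [hinner, hsys.comp_gamma_lambda hφ] using hW (Λ a x)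

theorem subdifferential_comp_gamma (hsys : SpectralDecompositionSystem 𝓗 𝓧 S γ Λ τ)
    (hproper : ∃ x, φ x ≠ ⊤) (hbot : ∀ x, φ x ≠ ⊥) (hφ : ∀ (s : S) (x : 𝓧), φ (s • x) = φ x)
    (Z : 𝓗) : subdifferential (fun W => φ (γ W)) Z =
      {W : 𝓗 | ∃ y ∈ subdifferential φ (γ Z), ∃ a : A, Z = Λ a (γ Z) ∧ W = Λ a y} := by
  ext W
  constructor
  · intro hW
    obtain ⟨x, hx⟩ := hproper
    obtain ⟨a₀, -⟩ := hsys.exists_decomp Z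
    have htop : φ (γ Z) ≠ ⊤ := ne_top_of_mem_subdifferential (f := fun V => φ (γ V))
      ⟨Λ a₀ x, by rwa [hsys.comp_gamma_lambda hφ]⟩ hW
    obtain ⟨a, haZ, haW⟩ :=
      hsys.exists_simultaneous_decomp_of_mem_subdifferential_comp (hbot _) htop hW
    exact ⟨γ W, hsys.gamma_mem_subdifferential_of_mem_subdifferential_comp hφ hW haZ haW,
      a, haZ, haW⟩
  · rintro ⟨y, hy, a, haZ, rfl⟩
    exact hsys.lambda_mem_subdifferential_comp hφ haZ hy

theorem subdifferential_comp_gamma_nonempty_iff (hsys : SpectralDecompositionSystem 𝓗 𝓧 S γ Λ τ)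
    (hproper : ∃ x, φ x ≠ ⊤) (hbot : ∀ x, φ x ≠ ⊥) (hφ : ∀ (s : S) (x : 𝓧), φ (s • x) = φ x)
    (Z : 𝓗) :
    (subdifferential (fun W => φ (γ W)) Z).Nonempty ↔ (subdifferential φ (γ Z)).Nonempty := by
  rw [hsys.subdifferential_comp_gamma hproper hbot hφ]
  obtain ⟨a, ha⟩ := hsys.exists_decomp Z
  exact ⟨fun ⟨_, y, hy, _⟩ => ⟨y, hy⟩, fun ⟨y, hy⟩ => ⟨Λ a y, y, hy, a, ha, rfl⟩⟩

theorem subdifferential_comp_gamma_subsingleton_iff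
    (hsys : SpectralDecompositionSystem 𝓗 𝓧 S γ Λ τ) (hproper : ∃ x, φ x ≠ ⊤)
    (hbot : ∀ x, φ x ≠ ⊥) (hφ : ∀ (s : S) (x : 𝓧), φ (s • x) = φ x) (Z : 𝓗) :
    (subdifferential (fun W => φ (γ W)) Z).Subsingleton ↔
      (subdifferential φ (γ Z)).Subsingleton := by
  constructor
  · intro h y hy y' hy'
    obtain ⟨a, ha⟩ := hsys.exists_decomp Z
    exact hsys.lambda_injective a
      (h (hsys.lambda_mem_subdifferential_comp hφ ha hy)
        (hsys.lambda_mem_subdifferential_comp hφ ha hy'))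
  · intro h
    refine (convex_subdifferential _ Z).subsingleton_of_norm_eq fun W hW W' hW' => ?_
    rw [hsys.subdifferential_comp_gamma hproper hbot hφ] at hW hW'
    obtain ⟨y, hy, a, -, rfl⟩ := hW
    obtain ⟨y', hy', a', -, rfl⟩ := hW'
    rw [hsys.norm_lambda, hsys.norm_lambda, h hy hy']

end SpectralDecompositionSystem

/-- Subdifferential of a spectral function, set formula. -/
theorem spectral_function_subdifferential_formula
    (γ : 𝓗 → 𝓧) (Λ : A → 𝓧 →ₗ[ℝ] 𝓗) (τ : 𝓧 → 𝓧)
    (hsys : SpectralDecompositionSystem 𝓗 𝓧 S γ Λ τ)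
    (φ : 𝓧 → EReal) (hproper : ∃ x, φ x ≠ ⊤) (hbot : ∀ x, φ x ≠ ⊥)
    (hφ : ∀ (s : S) (x : 𝓧), φ (s • x) = φ x) (Z : 𝓗) :
    (subdifferential (fun W => φ (γ W)) Z =
      {W : 𝓗 | ∃ y ∈ subdifferential φ (γ Z), ∃ a : A, Z = Λ a (γ Z) ∧ W = Λ a y}) ∧
    ((∃ W₀ : 𝓗, subdifferential (fun W => φ (γ W)) Z = {W₀}) ↔
      (∃ y₀ : 𝓧, subdifferential φ (γ Z) = {y₀})) := by
  refine ⟨hsys.subdifferential_comp_gamma hproper hbot hφ Z, ?_⟩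
  simp only [Set.exists_eq_singleton_iff_nonempty_subsingleton]
  exact and_congr (hsys.subdifferential_comp_gamma_nonempty_iff hproper hbot hφ Z)
    (hsys.subdifferential_comp_gamma_subsingleton_iff hproper hbot hφ Z)
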